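/- Let n ≥ 3, let a, b, c be integers with a ≥ 1, b ≥ 1, c ≥ 1 and a + b + c = n, and let m ≥ 0. Applying to the vector ((m+1)^a, m^b, (m+1)^c), in order, the simple reflections s_1, s_2, …, s_{a+b} yields the vector m·𝟙 + Σ_{j=1}^{a−1} α_j + Σ_{k=a+b}^{n} α_k; then further applying, in order, s_{a+b−1}, s_{a+b−2}, …, s_1 yields the vector (m+1)·𝟙 + Σ_{j=1}^{a} α_j. -/
import Mathlib


/-- The component number (in `{1, …, n}`) of a cyclic index `j : ZMod n`. -/
def compNo {n : ℕ} (j : ZMod n) : ℕ := if j.val = 0 then n else j.val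

/-- The `i`-th simple root (standard basis vector) of type `Ã_{n-1}`. -/
def stdRoot (n : ℕ) (i : ZMod n) : ZMod n → ℤ := fun j => if j = i then 1 else 0

/-- The `i`-th simple reflection: `(s_i v)_j = v_j` for `j ≠ i`, and
`(s_i v)_i = v_{i-1} + v_{i+1} - v_i` (indices mod `n`). -/
def simpleRefl (n : ℕ) (i : ZMod n) (v : ZMod n → ℤ) : ZMod n → ℤ :=
  fun j => if j = i then v (i - 1) + v (i + 1) - v i else v j

/-- Apply a list of simple reflections in order (head of the list applied first). -/
def applySeq (n : ℕ) (L : List (ZMod n)) (v : ZMod n → ℤ) : ZMod n → ℤ :=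
  L.foldl (fun w i => simpleRefl n i w) v

/-- Interpret a list of natural-number indices as cyclic indices mod `n`. -/
def natSeq (n : ℕ) (L : List ℕ) : List (ZMod n) := L.map (fun k => (k : ZMod n))

/-- A real root: a vector obtained from a simple root by a finite sequence of
simple reflections. -/
def IsRealRoot (n : ℕ) (v : ZMod n → ℤ) : Prop :=
  ∃ (L : List (ZMod n)) (k : ZMod n), v = applySeq n L (stdRoot n k)

/-- The vector whose first `a` components are `x`, next `b` components are `y`,
and remaining components are `z`. -/
def blockVec (n : ℕ) (x y z : ℤ) (a b : ℕ) : ZMod n → ℤ :=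
  fun j => if compNo j ≤ a then x else if compNo j ≤ a + b then y else z

/-- The all-ones vector `𝟙`. -/
def onesVec (n : ℕ) : ZMod n → ℤ := fun _ => 1

/-- The block of reflections `s_{d+1}, …, s_{n-1}; s_n, s_{n-1}, …, s_1; s_2, …, s_d`
(in order of application). -/
def blockW (n d : ℕ) : List ℕ :=
  List.range' (d+1) (n - 1 - d) ++ (List.range' 1 n).reverse ++ List.range' 2 (d - 1)

/-- The block of reflections `s_1, …, s_{a+b}; s_{a+b-1}, …, s_1; s_{a+b+1}, …, s_n;
s_{n-1}, …, s_{a+b+1}` (in order of application), with `d = a + b`. -/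
def blockW2 (n d : ℕ) : List ℕ :=
  List.range' 1 d ++ (List.range' 1 (d-1)).reverse ++ List.range' (d+1) (n - d) ++
    (List.range' (d+1) (n - 1 - d)).reverse

-- helpers

lemma compNo_pos {n : ℕ} (hn : 0 < n) (j : ZMod n) : 1 ≤ compNo j := by
  unfold compNo; split
  · omega
  · omega

lemma compNo_le {n : ℕ} (hn : 0 < n) (j : ZMod n) : compNo j ≤ n := by
  haveI : NeZero n := ⟨by omega⟩
  have := ZMod.val_lt j
  unfold compNo; split <;> omega

lemma compNo_cast {n : ℕ} (hn : 0 < n) {k : ℕ} (h1 : 1 ≤ k) (h2 : k ≤ n) :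
    compNo ((k : ZMod n)) = k := by
  haveI : NeZero n := ⟨by omega⟩
  rcases eq_or_lt_of_le h2 with rfl | h
  · simp [compNo, ZMod.natCast_self]
  · unfold compNo
    rw [ZMod.val_natCast_of_lt h, if_neg (by omega)]

lemma cast_compNo {n : ℕ} (hn : 0 < n) (j : ZMod n) : ((compNo j : ℕ) : ZMod n) = j := by
  haveI : NeZero n := ⟨by omega⟩
  unfold compNo
  split
  · rename_i h
    rw [ZMod.natCast_self]
    exact ((ZMod.val_eq_zero j).mp h).symm
  · exact ZMod.natCast_rightInverse j

lemma exists_rep {n : ℕ} (hn : 0 < n) (j : ZMod n) :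
    ∃ k : ℕ, 1 ≤ k ∧ k ≤ n ∧ j = ((k : ℕ) : ZMod n) :=
  ⟨compNo j, compNo_pos hn j, compNo_le hn j, (cast_compNo hn j).symm⟩

lemma cast_sub_one {n : ℕ} {k : ℕ} (hk : 1 ≤ k) :
    ((k : ℕ) : ZMod n) - 1 = ((k - 1 : ℕ) : ZMod n) := by
  rw [Nat.cast_sub hk, Nat.cast_one]

lemma natSeq_append (n : ℕ) (L M : List ℕ) :
    natSeq n (L ++ M) = natSeq n L ++ natSeq n M := by
  simp [natSeq]

lemma applySeq_append (n : ℕ) (L M : List (ZMod n)) (v : ZMod n → ℤ) :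
    applySeq n (L ++ M) v = applySeq n M (applySeq n L v) := by
  simp [applySeq, List.foldl_append]

lemma applySeq_single (n : ℕ) (k : ℕ) (v : ZMod n → ℤ) :
    applySeq n (natSeq n [k]) v = simpleRefl n ((k : ℕ) : ZMod n) v := rfl

lemma applySeq_natSeq_nil (n : ℕ) (v : ZMod n → ℤ) : applySeq n (natSeq n []) v = v := rfl

-- ascending sweep
lemma asc {n : ℕ} (hn : 3 ≤ n) (v : ZMod n → ℤ) (hv : v 0 = v 1) :
    ∀ t, t ≤ n - 1 →
      applySeq n (natSeq n (List.range' 1 t)) v =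
        fun j => if compNo j ≤ t then v (j + 1) else v j := by
  have hn0 : 0 < n := by omega
  intro t
  induction t with
  | zero =>
    intro _
    funext j
    have := compNo_pos hn0 j
    rw [List.range'_zero, applySeq_natSeq_nil, if_neg (by omega)]
  | succ t ih =>
    intro ht
    have ih' := ih (by omega)
    rw [List.range'_concat, natSeq_append, applySeq_append, ih', applySeq_single]
    funext j
    simp only [simpleRefl]
    by_cases hj : j = (((1 + 1 * t : ℕ) : ZMod n))
    · rw [if_pos hj]
      have hc1 : compNo (((1 + 1 * t : ℕ) : ZMod n)) = 1 + t := by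
        rw [compNo_cast hn0 (by omega) (by omega)]; omega
      have hsub : ((1 + 1 * t : ℕ) : ZMod n) - 1 = ((t : ℕ) : ZMod n) := by
        push_cast; ring
      have hadd : ((1 + 1 * t : ℕ) : ZMod n) + 1 = ((t + 2 : ℕ) : ZMod n) := by
        push_cast; ring
      have hadd' : ((t : ℕ) : ZMod n) + 1 = ((1 + 1 * t : ℕ) : ZMod n) := by
        push_cast; ring
      have h2 : compNo ((t + 2 : ℕ) : ZMod n) = t + 2 := compNo_cast hn0 (by omega) (by omega)
      have hA : (if compNo ((t : ℕ) : ZMod n) ≤ t then v (((t : ℕ) : ZMod n) + 1)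
          else v ((t : ℕ) : ZMod n)) = v (((1 + 1 * t : ℕ) : ZMod n)) := by
        rcases Nat.eq_zero_or_pos t with rfl | htpos
        · have hcc : compNo ((0 : ℕ) : ZMod n) = n := by
            simp [compNo, ZMod.val_zero]
          rw [if_neg (by rw [hcc]; omega)]
          simpa using hv
        · rw [if_pos (by rw [compNo_cast hn0 htpos (by omega)]), hadd']
      have hB : (if compNo (((1 + 1 * t : ℕ) : ZMod n) + 1) ≤ t
          then v ((((1 + 1 * t : ℕ) : ZMod n) + 1) + 1)
          else v (((1 + 1 * t : ℕ) : ZMod n) + 1)) = v (((1 + 1 * t : ℕ) : ZMod n) + 1) := by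
        rw [if_neg (by rw [hadd, h2]; omega)]
      have hC : (if compNo ((1 + 1 * t : ℕ) : ZMod n) ≤ t
          then v (((1 + 1 * t : ℕ) : ZMod n) + 1)
          else v ((1 + 1 * t : ℕ) : ZMod n)) = v ((1 + 1 * t : ℕ) : ZMod n) := by
        rw [if_neg (by rw [hc1]; omega)]
      rw [hsub, hA, hB, hC, hj, if_pos (by rw [hc1]; omega)]
      ring
    · rw [if_neg hj]
      have hne : compNo j ≠ 1 + t := by
        intro h
        apply hj
        rw [← cast_compNo hn0 j, h]
        congr 1
        omega
      have := compNo_pos hn0 j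
      by_cases h : compNo j ≤ t
      · rw [if_pos h, if_pos (by omega)]
      · rw [if_neg h, if_neg (by omega)]

-- descending sweep
lemma desc {n : ℕ} (hn : 3 ≤ n) (d : ℕ) (hd2 : 2 ≤ d) (hdn : d ≤ n - 1)
    (w : ZMod n → ℤ) (hw : w ((d : ℕ) : ZMod n) = w (((d - 1 : ℕ)) : ZMod n) + 1) :
    ∀ r, r ≤ d - 1 →
      applySeq n (natSeq n ((List.range' (d - r) r).reverse)) w =
        fun j => if d - r ≤ compNo j ∧ compNo j ≤ d - 1 then w (j - 1) + 1 else w j := by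
  have hn0 : 0 < n := by omega
  intro r
  induction r with
  | zero =>
    intro _
    funext j
    have h1 := compNo_le hn0 j
    rw [List.range'_zero, List.reverse_nil, applySeq_natSeq_nil, if_neg (by omega)]
  | succ r ih =>
    intro hr
    have ih' := ih (by omega)
    have hstep : d - (r + 1) + 1 = d - r := by omega
    have hsplit : List.range' (d - (r + 1)) (r + 1) = (d - (r+1)) :: List.range' (d - r) r := by
      rw [List.range'_succ, hstep]
    rw [hsplit, List.reverse_cons, natSeq_append, applySeq_append, ih', applySeq_single]
    funext j
    have hk01 : 1 ≤ d - (r + 1) := by omega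
    have hk0n : d - (r + 1) ≤ n := by omega
    simp only [simpleRefl]
    by_cases hj : j = ((d - (r+1) : ℕ) : ZMod n)
    · rw [if_pos hj]
      have hck0 : compNo ((d - (r+1) : ℕ) : ZMod n) = d - (r+1) := compNo_cast hn0 hk01 hk0n
      -- index k0 - 1
      have hcm1 : (if d - r ≤ compNo (((d - (r+1) : ℕ) : ZMod n) - 1) ∧
          compNo (((d - (r+1) : ℕ) : ZMod n) - 1) ≤ d - 1
          then w (((d - (r+1) : ℕ) : ZMod n) - 1 - 1) + 1
          else w (((d - (r+1) : ℕ) : ZMod n) - 1)) = w (((d - (r+1) : ℕ) : ZMod n) - 1) := by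
        rcases Nat.eq_or_lt_of_le hk01 with h1 | h1
        · have h0 : ((d - (r+1) : ℕ) : ZMod n) - 1 = ((0:ℕ) : ZMod n) := by
            rw [cast_sub_one hk01, ← h1]
        -- now compNo is n
          have hcc : compNo (((d - (r+1) : ℕ) : ZMod n) - 1) = n := by
            rw [h0]; simp [compNo, ZMod.val_zero]
          rw [if_neg (by rw [hcc]; omega)]
        · have heq : ((d - (r+1) : ℕ) : ZMod n) - 1 = ((d - (r+1) - 1 : ℕ) : ZMod n) :=
            cast_sub_one hk01
          have hcc : compNo (((d - (r+1) : ℕ) : ZMod n) - 1) = d - (r+1) - 1 := by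
            rw [heq, compNo_cast hn0 (by omega) (by omega)]
          rw [if_neg (by rw [hcc]; omega)]
      -- index k0 + 1
      have hp : ((d - (r+1) : ℕ) : ZMod n) + 1 = ((d - (r+1) + 1 : ℕ) : ZMod n) := by
        push_cast; ring
      have hcp : compNo ((d - (r+1) + 1 : ℕ) : ZMod n) = d - (r+1) + 1 :=
        compNo_cast hn0 (by omega) (by omega)
      have hplus : (if d - r ≤ compNo (((d - (r+1) : ℕ) : ZMod n) + 1) ∧
          compNo (((d - (r+1) : ℕ) : ZMod n) + 1) ≤ d - 1
          then w (((d - (r+1) : ℕ) : ZMod n) + 1 - 1) + 1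
          else w (((d - (r+1) : ℕ) : ZMod n) + 1)) = w ((d - (r+1) : ℕ) : ZMod n) + 1 := by
        rw [hp, hcp]
        rcases Nat.eq_zero_or_pos r with rfl | hrpos
        · rw [if_neg (by omega)]
          rw [show d - (0+1) + 1 = d from by omega, hw]
        · rw [if_pos (by omega)]
          rw [cast_sub_one (by omega), show d - (r+1) + 1 - 1 = d - (r+1) from by omega]
      rw [hcm1, hplus, if_neg (by rw [hck0]; omega), hj, if_pos (by rw [hck0]; omega)]
      ring
    · rw [if_neg hj]
      have hne : compNo j ≠ d - (r+1) := by
        intro h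
        exact hj (by rw [← cast_compNo hn0 j, h])
      by_cases h : d - r ≤ compNo j ∧ compNo j ≤ d - 1
      · rw [if_pos h, if_pos (by omega)]
      · rw [if_neg h, if_neg (by omega)]

lemma sum_stdRoot {n : ℕ} (hn : 0 < n) (s t : ℕ) (hs : 1 ≤ s) (ht : t ≤ n) (j : ZMod n) :
    (∑ k ∈ Finset.Icc s t, stdRoot n (k : ZMod n) j) =
      if s ≤ compNo j ∧ compNo j ≤ t then 1 else 0 := by
  have : ∀ k ∈ Finset.Icc s t, stdRoot n (k : ZMod n) j =
      if k = compNo j then (1 : ℤ) else 0 := by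
    intro k hk
    rw [Finset.mem_Icc] at hk
    unfold stdRoot
    congr 1
    simp only [eq_iff_iff]
    constructor
    · intro h; rw [h, compNo_cast hn (by omega) (by omega)]
    · intro h; rw [h, cast_compNo hn]
  rw [Finset.sum_congr rfl this, Finset.sum_ite_eq' (Finset.Icc s t) (compNo j) (fun _ => (1:ℤ))]
  simp [Finset.mem_Icc]

theorem statement10 (n : ℕ) (hn : 3 ≤ n) (a b c m : ℕ)
    (ha : 1 ≤ a) (hb : 1 ≤ b) (hc : 1 ≤ c) (habc : a + b + c = n) :
    (applySeq n (natSeq n (List.range' 1 (a + b)))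
        (blockVec n ((m : ℤ) + 1) (m : ℤ) ((m : ℤ) + 1) a b) =
      (m : ℤ) • onesVec n + (∑ j ∈ Finset.Icc 1 (a - 1), stdRoot n (j : ZMod n)) +
        ∑ k ∈ Finset.Icc (a + b) n, stdRoot n (k : ZMod n)) ∧
    (applySeq n (natSeq n (List.range' 1 (a + b) ++ (List.range' 1 (a + b - 1)).reverse))
        (blockVec n ((m : ℤ) + 1) (m : ℤ) ((m : ℤ) + 1) a b) =
      ((m : ℤ) + 1) • onesVec n + ∑ j ∈ Finset.Icc 1 a, stdRoot n (j : ZMod n)) := by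
  have hn0 : 0 < n := by omega
  set v := blockVec n ((m : ℤ) + 1) (m : ℤ) ((m : ℤ) + 1) a b with hv
  have hcompNo0 : compNo ((0 : ZMod n)) = n := by simp [compNo, ZMod.val_zero]
  have hcompNo1 : compNo ((1 : ZMod n)) = 1 := by
    have h11 : ((1:ℕ) : ZMod n) = (1 : ZMod n) := by push_cast; ring
    rw [← h11, compNo_cast hn0 le_rfl (by omega)]
  have hv01 : v 0 = v 1 := by
    rw [hv]
    unfold blockVec
    rw [hcompNo0, hcompNo1]
    rw [if_neg (by omega), if_neg (by omega), if_pos ha]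
  have h1 : ∀ j, applySeq n (natSeq n (List.range' 1 (a + b))) v j =
      if compNo j ≤ a + b then v (j + 1) else v j :=
    fun j => congrFun (asc hn v hv01 (a + b) (by omega)) j
  have hvval : ∀ k : ℕ, 1 ≤ k → k ≤ n → v ((k : ℕ) : ZMod n) =
      if k ≤ a then (m : ℤ) + 1 else if k ≤ a + b then (m : ℤ) else (m : ℤ) + 1 := by
    intro k h1k h2k
    rw [hv]
    unfold blockVec
    rw [compNo_cast hn0 h1k h2k]
  -- values of w := applySeq (range' 1 (a+b)) v
  have hwval : ∀ k : ℕ, 1 ≤ k → k ≤ n →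
      applySeq n (natSeq n (List.range' 1 (a + b))) v ((k : ℕ) : ZMod n) =
      if k ≤ a - 1 then (m : ℤ) + 1 else if k ≤ a + b - 1 then (m : ℤ) else (m : ℤ) + 1 := by
    intro k h1k h2k
    rw [h1, compNo_cast hn0 h1k h2k]
    by_cases h : k ≤ a + b
    · rw [if_pos h]
      have hkp : ((k : ℕ) : ZMod n) + 1 = ((k + 1 : ℕ) : ZMod n) := by push_cast; ring
      rw [hkp, hvval (k+1) (by omega) (by omega)]
      by_cases h1 : k + 1 ≤ a
      · rw [if_pos h1, if_pos (by omega)]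
      · rw [if_neg h1]
        by_cases h2 : k + 1 ≤ a + b
        · rw [if_pos h2, if_neg (by omega), if_pos (by omega)]
        · rw [if_neg h2, if_neg (by omega), if_neg (by omega)]
    · rw [if_neg h, hvval k h1k h2k]
      rw [if_neg (by omega), if_neg (by omega), if_neg (by omega), if_neg (by omega)]
  have hw0 : applySeq n (natSeq n (List.range' 1 (a + b))) v ((0:ℕ) : ZMod n) = (m : ℤ) + 1 := by
    rw [h1]
    have h00 : ((0:ℕ) : ZMod n) = (0 : ZMod n) := by push_cast; ring
    rw [h00, hcompNo0, if_neg (by omega), hv]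
    unfold blockVec
    rw [hcompNo0, if_neg (by omega), if_neg (by omega)]
  -- first part
  have key1 : applySeq n (natSeq n (List.range' 1 (a + b))) v =
      (m : ℤ) • onesVec n + (∑ j ∈ Finset.Icc 1 (a - 1), stdRoot n (j : ZMod n)) +
        ∑ k ∈ Finset.Icc (a + b) n, stdRoot n (k : ZMod n) := by
    funext j
    obtain ⟨k, hk1, hk2, rfl⟩ := exists_rep hn0 j
    simp only [Pi.add_apply, Pi.smul_apply, onesVec, smul_eq_mul, mul_one, Finset.sum_apply]
    rw [sum_stdRoot hn0 1 (a-1) le_rfl (by omega), sum_stdRoot hn0 (a+b) n (by omega) le_rfl,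
      compNo_cast hn0 hk1 hk2, hwval k hk1 hk2]
    by_cases h1 : k ≤ a - 1
    · rw [if_pos h1, if_pos (by omega), if_neg (by omega)]; ring
    · rw [if_neg h1]
      by_cases h2 : k ≤ a + b - 1
      · rw [if_pos h2, if_neg (by omega), if_neg (by omega)]; ring
      · rw [if_neg h2, if_neg (by omega), if_pos (by omega)]; ring
  refine ⟨key1, ?_⟩
  -- second part
  have hwhyp : applySeq n (natSeq n (List.range' 1 (a + b))) v ((a + b : ℕ) : ZMod n) =
      applySeq n (natSeq n (List.range' 1 (a + b))) v ((a + b - 1 : ℕ) : ZMod n) + 1 := by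
    rw [hwval (a+b) (by omega) (by omega), hwval (a+b-1) (by omega) (by omega)]
    rw [if_neg (by omega), if_neg (by omega), if_neg (by omega), if_pos (by omega)]
  have h2 := desc hn (a + b) (by omega) (by omega)
    (applySeq n (natSeq n (List.range' 1 (a + b))) v) hwhyp (a + b - 1) le_rfl
  have hrange : a + b - (a + b - 1) = 1 := by omega
  rw [hrange] at h2
  have h2' := fun j => congrFun h2 j
  rw [natSeq_append, applySeq_append]
  funext j
  obtain ⟨k, hk1, hk2, rfl⟩ := exists_rep hn0 j
  rw [h2' ((k : ℕ) : ZMod n)]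
  simp only [Pi.add_apply, Pi.smul_apply, onesVec, smul_eq_mul, mul_one, Finset.sum_apply]
  rw [sum_stdRoot hn0 1 a le_rfl (by omega), compNo_cast hn0 hk1 hk2]
  by_cases h : 1 ≤ k ∧ k ≤ a + b - 1
  · rw [if_pos h]
    rcases Nat.eq_or_lt_of_le hk1 with hone | hone
    · -- k = 1
      have hz : ((k : ℕ) : ZMod n) - 1 = ((0:ℕ) : ZMod n) := by
        rw [cast_sub_one hk1, ← hone]
      rw [hz, hw0, if_pos (by omega)]
    · rw [cast_sub_one hk1, hwval (k - 1) (by omega) (by omega)]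
      by_cases h2 : k - 1 ≤ a - 1
      · rw [if_pos h2, if_pos (by omega)]
      · rw [if_neg h2, if_pos (by omega), if_neg (by omega)]; ring
  · rw [if_neg h, hwval k hk1 hk2]
    rw [if_neg (by omega), if_neg (by omega), if_neg (by omega)]
    ring
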